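/- arXiv:1506.04490 — 2 statements merged into one kernel-verified Lean document; each statement's English description precedes it below -/
import Mathlib

section
/- The monomials 1, (a^+)^r for r ≥ 1, (a^-)^r for r ≥ 1, and (a^+)^s k (a^-)^t for s, t ≥ 0, acting on the Fock space F, are linearly independent operators. -/
/-!
In the basis `|m⟩`, the operator `(a^+)^s k (a^-)^t` is the matrix unit `|s⟩⟨t|`, while `1`,
`(a^+)^r` and `(a^-)^r` have their entries `⟨n|·|m⟩` equal to `1` on the diagonals
`n - m = 0, r, -r` respectively and `0` elsewhere. Given finitely many monomials, pick `M` beyond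
every column `t` of the matrix units among them. The entries `⟨M|·|M⟩`, `⟨M+r|·|M⟩`, `⟨M|·|M+r⟩`
separate the diagonal monomials and vanish on those matrix units, and `⟨s|·|t⟩ - ⟨M+s|·|M+t⟩`
vanishes on every diagonal monomial and picks out `|s⟩⟨t|` among the matrix units: a dual family
for every finite subfamily.
-/

/-- `a^+|m⟩ = |m+1⟩`. -/
noncomputable def aP : Module.End ℚ (ℕ →₀ ℚ) :=
  Finsupp.lsum ℚ fun m => Finsupp.lsingle (m + 1)

/-- `a^-|0⟩ = 0`, `a^-|m⟩ = |m-1⟩` for `m ≥ 1`. -/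
noncomputable def aM : Module.End ℚ (ℕ →₀ ℚ) :=
  Finsupp.lsum ℚ fun m => if m = 0 then 0 else Finsupp.lsingle (m - 1)

/-- `k|0⟩ = |0⟩`, `k|m⟩ = 0` for `m ≥ 1`. -/
noncomputable def kk : Module.End ℚ (ℕ →₀ ℚ) :=
  Finsupp.lsum ℚ fun m => if m = 0 then Finsupp.lsingle 0 else 0

/-- The family of monomials: `1`; `(a^+)^r` for `r ≥ 1`; `(a^-)^r` for `r ≥ 1`;
`(a^+)^s k (a^-)^t` for `s, t ≥ 0`. -/
noncomputable def mono :
    Unit ⊕ {r : ℕ // 1 ≤ r} ⊕ {r : ℕ // 1 ≤ r} ⊕ ℕ × ℕ → Module.End ℚ (ℕ →₀ ℚ)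
  | .inl _ => 1
  | .inr (.inl r) => aP ^ (r : ℕ)
  | .inr (.inr (.inl r)) => aM ^ (r : ℕ)
  | .inr (.inr (.inr (s, t))) => aP ^ s * kk * aM ^ t

section Operators

variable (c : ℚ)

lemma aP_single (m : ℕ) : aP (Finsupp.single m c) = Finsupp.single (m + 1) c := by
  simp [aP]

lemma aM_single_zero : aM (Finsupp.single 0 c) = 0 := by
  simp [aM]

lemma aM_single_succ (m : ℕ) : aM (Finsupp.single (m + 1) c) = Finsupp.single m c := by
  simp [aM]

lemma kk_single (m : ℕ) : kk (Finsupp.single m c) = if m = 0 then Finsupp.single 0 c else 0 := by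
  split_ifs with h <;> simp [kk, h]

lemma aP_pow_single (r m : ℕ) : (aP ^ r) (Finsupp.single m c) = Finsupp.single (m + r) c := by
  induction r with
  | zero => simp
  | succ r ih => rw [pow_succ', Module.End.mul_apply, ih, aP_single, add_assoc]

lemma aM_pow_single_add (r m : ℕ) : (aM ^ r) (Finsupp.single (m + r) c) = Finsupp.single m c := by
  induction r with
  | zero => simp
  | succ r ih => rw [pow_succ, Module.End.mul_apply, ← add_assoc, aM_single_succ, ih]

lemma aM_pow_single_of_lt {r m : ℕ} (h : m < r) : (aM ^ r) (Finsupp.single m c) = 0 := by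
  obtain ⟨d, rfl⟩ := Nat.exists_eq_add_of_lt h
  have h0 : (aM ^ m) (Finsupp.single m c) = Finsupp.single 0 c := by
    simpa using aM_pow_single_add c m 0
  rw [show m + d + 1 = d + 1 + m by omega, pow_add, Module.End.mul_apply, h0, pow_succ,
    Module.End.mul_apply, aM_single_zero, map_zero]

lemma aP_pow_mul_kk_mul_aM_pow_single (s t m : ℕ) :
    (aP ^ s * kk * aM ^ t) (Finsupp.single m c) = if m = t then Finsupp.single s c else 0 := by
  simp only [Module.End.mul_apply]
  rcases lt_or_ge m t with h | h
  · rw [aM_pow_single_of_lt c h, map_zero, map_zero, if_neg h.ne]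
  · obtain ⟨d, rfl⟩ := Nat.exists_eq_add_of_le h
    rw [add_comm, aM_pow_single_add, kk_single]
    rcases d with _ | d <;> simp [aP_pow_single]

end Operators

section MatrixCoeff

variable (n m : ℕ)

noncomputable def matrixCoeff {R : Type*} [CommSemiring R] : Module.End R (ℕ →₀ R) →ₗ[R] R :=
  Finsupp.lapply n ∘ₗ LinearMap.applyₗ (Finsupp.single m 1)

lemma matrixCoeff_apply {R : Type*} [CommSemiring R] (T : Module.End R (ℕ →₀ R)) :
    matrixCoeff n m T = T (Finsupp.single m 1) n :=
  rfl

lemma matrixCoeff_one : matrixCoeff n m (1 : Module.End ℚ (ℕ →₀ ℚ)) = if n = m then 1 else 0 := by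
  simp [matrixCoeff_apply, Finsupp.single_apply, eq_comm]

lemma matrixCoeff_aP_pow (r : ℕ) : matrixCoeff n m (aP ^ r) = if n = m + r then 1 else 0 := by
  simp [matrixCoeff_apply, aP_pow_single, Finsupp.single_apply, eq_comm]

lemma matrixCoeff_aM_pow (r : ℕ) : matrixCoeff n m (aM ^ r) = if m = n + r then 1 else 0 := by
  rw [matrixCoeff_apply]
  rcases lt_or_ge m r with h | h
  · rw [aM_pow_single_of_lt 1 h, if_neg (by omega), Finsupp.coe_zero, Pi.zero_apply]
  · obtain ⟨k, rfl⟩ := Nat.exists_eq_add_of_le' h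
    simp [aM_pow_single_add, Finsupp.single_apply, eq_comm]

lemma matrixCoeff_aP_pow_mul_kk_mul_aM_pow (s t : ℕ) :
    matrixCoeff n m (aP ^ s * kk * aM ^ t) = if n = s ∧ m = t then 1 else 0 := by
  rw [matrixCoeff_apply, aP_pow_mul_kk_mul_aM_pow_single]
  by_cases hm : m = t <;> simp [hm, Finsupp.single_apply, eq_comm]

end MatrixCoeff

noncomputable def monoProbe (M : ℕ) :
    Unit ⊕ {r : ℕ // 1 ≤ r} ⊕ {r : ℕ // 1 ≤ r} ⊕ ℕ × ℕ → Module.Dual ℚ (Module.End ℚ (ℕ →₀ ℚ))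
  | .inl _ => matrixCoeff M M
  | .inr (.inl r) => matrixCoeff (M + r) M
  | .inr (.inr (.inl r)) => matrixCoeff M (M + r)
  | .inr (.inr (.inr (s, t))) => matrixCoeff s t - matrixCoeff (M + s) (M + t)

def monoColumn : Unit ⊕ {r : ℕ // 1 ≤ r} ⊕ {r : ℕ // 1 ≤ r} ⊕ ℕ × ℕ → ℕ
  | .inr (.inr (.inr (_, t))) => t
  | _ => 0

lemma monoProbe_mono {M : ℕ} (i j : Unit ⊕ {r : ℕ // 1 ≤ r} ⊕ {r : ℕ // 1 ≤ r} ⊕ ℕ × ℕ)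
    (hj : monoColumn j < M) : monoProbe M i (mono j) = if i = j then 1 else 0 := by
  rcases i with _ | ⟨r, hr⟩ | ⟨r, hr⟩ | ⟨s, t⟩ <;>
  rcases j with _ | ⟨r', hr'⟩ | ⟨r', hr'⟩ | ⟨s', t'⟩ <;>
  simp [monoProbe, mono, monoColumn, matrixCoeff_one, matrixCoeff_aP_pow, matrixCoeff_aM_pow,
    matrixCoeff_aP_pow_mul_kk_mul_aM_pow, add_assoc] at hj ⊢ <;>
  omega

/-- these monomials are linearly independent operators on the Fock space. -/
theorem stmt4 : LinearIndependent ℚ mono := by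
  refine linearIndependent_iff_finset_linearIndependent.mpr fun S => ?_
  obtain ⟨M, hM⟩ : ∃ M, ∀ j ∈ S, monoColumn j < M :=
    ⟨S.sup monoColumn + 1, fun j hj => Nat.lt_succ_of_le (S.le_sup hj)⟩
  refine .of_pairwise_dual_eq_zero_one _ (fun i => monoProbe M i) (fun i j hij => ?_) fun i => ?_
  · simpa [hij] using monoProbe_mono i.1 j.1 (hM j j.2)
  · simpa using monoProbe_mono i.1 i.1 (hM i i.2)
end

section
/- For the 2-species TASEP on 4 sites in the sector with multiplicities (m_0, m_1, m_2) = (2,1,1), the vector |P̄⟩ = 3|0012⟩ + |0021⟩ + 2|0102⟩ + 3|0120⟩ + 2|0201⟩ + |0210⟩ + |1002⟩ + 2|1020⟩ + 3|1200⟩ + 3|2001⟩ + 2|2010⟩ + |2100⟩ satisfies H|P̄⟩ = 0. -/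
/-- Exchange the entries at the cyclically adjacent sites `i, i+1`. -/
def swapAd {L : ℕ} [NeZero L] (i : Fin L) (σ : Fin L → Fin 3) : Fin L → Fin 3 :=
  fun r => if r = i then σ (i + 1) else if r = i + 1 then σ i else σ r

/-- The Markov matrix `H = Σ_{i ∈ ℤ_L} h_{i,i+1}` of the 2-TASEP on `ℤ_L`. -/
noncomputable def Hmat (L : ℕ) [NeZero L] :
    ((Fin L → Fin 3) →₀ ℚ) →ₗ[ℚ] ((Fin L → Fin 3) →₀ ℚ) :=
  Finsupp.lsum ℚ fun σ => ∑ i : Fin L,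
    if σ (i + 1) < σ i then Finsupp.lsingle (swapAd i σ) - Finsupp.lsingle σ else 0

/- The coefficient `c` is pulled out so that `H|P̄⟩` unfolds to a rational combination of the
basis vectors `single τ 1` alone, whose vanishing `module` then checks. -/
theorem Hmat_single {L : ℕ} [NeZero L] (σ : Fin L → Fin 3) (c : ℚ) :
    Hmat L (Finsupp.single σ c) = c • ∑ i : Fin L,
      if σ (i + 1) < σ i then Finsupp.single (swapAd i σ) 1 - Finsupp.single σ 1 else 0 := by
  rw [Hmat, Finsupp.lsum_single, LinearMap.sum_apply, Finset.smul_sum]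
  refine Finset.sum_congr rfl fun i _ => ?_
  split_ifs <;> simp [smul_sub]

section FourSites

variable (a b c d : Fin 3)

theorem swapAd_vec4_zero : swapAd (0 : Fin 4) ![a, b, c, d] = ![b, a, c, d] := by
  funext r; fin_cases r <;> rfl

theorem swapAd_vec4_one : swapAd (1 : Fin 4) ![a, b, c, d] = ![a, c, b, d] := by
  funext r; fin_cases r <;> rfl

theorem swapAd_vec4_two : swapAd (2 : Fin 4) ![a, b, c, d] = ![a, b, d, c] := by
  funext r; fin_cases r <;> rfl

theorem swapAd_vec4_three : swapAd (3 : Fin 4) ![a, b, c, d] = ![d, b, c, a] := by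
  funext r; fin_cases r <;> rfl

end FourSites

/-- the vector
`|P̄⟩ = 3|0012⟩ + |0021⟩ + 2|0102⟩ + 3|0120⟩ + 2|0201⟩ + |0210⟩ + |1002⟩ + 2|1020⟩
+ 3|1200⟩ + 3|2001⟩ + 2|2010⟩ + |2100⟩` is a steady state of the 2-TASEP on 4
sites in the sector `(m_0, m_1, m_2) = (2,1,1)`: `H|P̄⟩ = 0`. -/
theorem stmt14 :
    Hmat 4 (Finsupp.single ![0, 0, 1, 2] (3 : ℚ) + Finsupp.single ![0, 0, 2, 1] 1
      + Finsupp.single ![0, 1, 0, 2] 2 + Finsupp.single ![0, 1, 2, 0] 3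
      + Finsupp.single ![0, 2, 0, 1] 2 + Finsupp.single ![0, 2, 1, 0] 1
      + Finsupp.single ![1, 0, 0, 2] 1 + Finsupp.single ![1, 0, 2, 0] 2
      + Finsupp.single ![1, 2, 0, 0] 3 + Finsupp.single ![2, 0, 0, 1] 3
      + Finsupp.single ![2, 0, 1, 0] 2 + Finsupp.single ![2, 1, 0, 0] 1) = 0 := by
  simp only [map_add, Hmat_single, Fin.sum_univ_four, Fin.reduceAdd, swapAd_vec4_zero,
    swapAd_vec4_one, swapAd_vec4_two, swapAd_vec4_three, Fin.isValue, Matrix.cons_val_zero,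
    Matrix.cons_val_one, Matrix.cons_val, Fin.reduceLT, lt_self_iff_false, not_lt_zero,
    Fin.lt_one_iff, zero_lt_one, Fin.reduceEq, ↓reduceIte, add_zero, zero_add]
  module
end
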